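/- arXiv:2512.10567 — 3 statements merged into one kernel-verified Lean document; each statement's English description precedes it below -/
import Mathlib

section
/- Let n ≥ 1 and q ∈ ℂ nonzero. Then the family of PBW monomials z^a y^b x^c, indexed by triples of multi-indices (a, b, c) ∈ (Fin n → ℕ)³, is a basis of 𝔥_n(q) as a ℂ-vector space (the family is linearly independent and spans 𝔥_n(q)). -/
/-!
Spanning: the span of the PBW monomials contains `1` and is stable under left multiplication by
each generator, since `z_i`, `y_i` and `x_i` times a PBW monomial straighten to combinations of
PBW monomials; the only real computation is `x_i y_i^k = q^{-k} y_i^k x_i + β_k z_i y_i^{k-1}`.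

Independence: read in PBW coordinates, the straightening formulas define operators on the free
vector space with basis the index triples `(a, b, c)`. These operators satisfy the defining
relations, hence give a representation `ρ` of `𝔥_n(q)`, and `ρ (z^a y^b x^c)` maps the basis
vector of `(0, 0, 0)` to that of `(a, b, c)`.
-/

noncomputable section

open scoped BigOperators

namespace QHeisenberg

/-- Index type for the `3n` generators: `x`-, `y`-, and `z`-variables. -/
abbrev GenIdx (n : ℕ) := Fin n ⊕ (Fin n ⊕ Fin n)

/-- The `x_i` generator in the free algebra. -/
def fX (n : ℕ) (i : Fin n) : FreeAlgebra ℂ (GenIdx n) := FreeAlgebra.ι ℂ (Sum.inl i)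

/-- The `y_i` generator in the free algebra. -/
def fY (n : ℕ) (i : Fin n) : FreeAlgebra ℂ (GenIdx n) := FreeAlgebra.ι ℂ (Sum.inr (Sum.inl i))

/-- The `z_i` generator in the free algebra. -/
def fZ (n : ℕ) (i : Fin n) : FreeAlgebra ℂ (GenIdx n) := FreeAlgebra.ι ℂ (Sum.inr (Sum.inr i))

/-- The defining relations of the q-Heisenberg algebra `𝔥_n(q)`. -/
inductive Rel (n : ℕ) (q : ℂ) :
    FreeAlgebra ℂ (GenIdx n) → FreeAlgebra ℂ (GenIdx n) → Prop
  | xx (i j : Fin n) : Rel n q (fX n i * fX n j) (fX n j * fX n i)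
  | yy (i j : Fin n) : Rel n q (fY n i * fY n j) (fY n j * fY n i)
  | zz (i j : Fin n) : Rel n q (fZ n i * fZ n j) (fZ n j * fZ n i)
  | xz (i : Fin n) : Rel n q (fX n i * fZ n i) (q • (fZ n i * fX n i))
  | yz (i : Fin n) : Rel n q (fY n i * fZ n i) (q⁻¹ • (fZ n i * fY n i))
  | xy (i : Fin n) : Rel n q (fX n i * fY n i) (q⁻¹ • (fY n i * fX n i) + fZ n i)
  | xyne (i j : Fin n) : i ≠ j → Rel n q (fX n i * fY n j) (fY n j * fX n i)
  | xzne (i j : Fin n) : i ≠ j → Rel n q (fX n i * fZ n j) (fZ n j * fX n i)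
  | yzne (i j : Fin n) : i ≠ j → Rel n q (fY n i * fZ n j) (fZ n j * fY n i)

/-- The q-Heisenberg algebra `𝔥_n(q)`. -/
abbrev H (n : ℕ) (q : ℂ) := RingQuot (Rel n q)

/-- The generator `x_i` of `𝔥_n(q)`. -/
def X (n : ℕ) (q : ℂ) (i : Fin n) : H n q := RingQuot.mkAlgHom ℂ (Rel n q) (fX n i)

/-- The generator `y_i` of `𝔥_n(q)`. -/
def Y (n : ℕ) (q : ℂ) (i : Fin n) : H n q := RingQuot.mkAlgHom ℂ (Rel n q) (fY n i)

/-- The generator `z_i` of `𝔥_n(q)`. -/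
def Z (n : ℕ) (q : ℂ) (i : Fin n) : H n q := RingQuot.mkAlgHom ℂ (Rel n q) (fZ n i)

/-- `q` is not a root of unity: `q ^ k ≠ 1` for every `k ≥ 1`. -/
def NotRootOfUnity (q : ℂ) : Prop := ∀ k : ℕ, 1 ≤ k → q ^ k ≠ 1

end QHeisenberg

namespace QHeisenberg

/-- Ordered product `f 0 * f 1 * ⋯ * f (n-1)`, taken in increasing order of the index. -/
def ordProd {A : Type*} [Monoid A] (n : ℕ) (f : Fin n → A) : A :=
  ((List.finRange n).map f).prod

/-- The PBW monomial `z^a y^b x^c` of `𝔥_n(q)`. -/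
def pbw (n : ℕ) (q : ℂ) (a b c : Fin n → ℕ) : H n q :=
  ordProd n (fun i => Z n q i ^ a i) * ordProd n (fun i => Y n q i ^ b i) *
    ordProd n (fun i => X n q i ^ c i)

@[elab_as_elim]
theorem multiIndex_induction {ι : Type*} [Fintype ι] [DecidableEq ι] {p : (ι → ℕ) → Prop}
    (zero : p 0) (step : ∀ a i, p a → p (a + Pi.single i 1)) (a : ι → ℕ) : p a := by
  have add_single : ∀ b i m, p b → p (b + Pi.single i m) := by
    intro b i m hb
    induction m with
    | zero => simpa using hb
    | succ m ih => rw [Pi.single_add, ← add_assoc]; exact step _ i ih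
  rw [← Finset.univ_sum_single a]
  induction (Finset.univ : Finset ι) using Finset.induction_on with
  | empty => simpa using zero
  | insert j s hj ih => rw [Finset.sum_insert hj, add_comm]; exact add_single _ j _ ih

section OrdProd

variable {M : Type*} [Monoid M] {ι : Type*} [DecidableEq ι]

theorem mul_prod_map_eq_prod_map_update {L : List ι} (hL : L.Nodup) {i : ι} (hi : i ∈ L)
    (f : ι → M) (g : M) (hg : ∀ j ≠ i, Commute g (f j)) :
    g * (L.map f).prod = (L.map (Function.update f i (g * f i))).prod := by
  induction L with
  | nil => simp at hi
  | cons j L ih =>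
    obtain ⟨hjL, hL⟩ := List.nodup_cons.mp hL
    rw [List.map_cons, List.map_cons, List.prod_cons, List.prod_cons]
    by_cases hji : j = i
    · subst hji
      rw [Function.update_self, mul_assoc,
        List.map_congr_left fun k hk => Function.update_of_ne (ne_of_mem_of_not_mem hk hjL) _ _]
    · rw [Function.update_of_ne hji, ← mul_assoc, (hg j hji).eq, mul_assoc,
        ih hL (List.mem_of_ne_of_mem (Ne.symm hji) hi)]

theorem prod_map_mul_eq_prod_map_update {L : List ι} (hL : L.Nodup) {i : ι} (hi : i ∈ L)
    (f : ι → M) (g : M) (hg : ∀ j ≠ i, Commute (f j) g) :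
    (L.map f).prod * g = (L.map (Function.update f i (f i * g))).prod := by
  induction L with
  | nil => simp at hi
  | cons j L ih =>
    obtain ⟨hjL, hL⟩ := List.nodup_cons.mp hL
    rw [List.map_cons, List.map_cons, List.prod_cons, List.prod_cons]
    by_cases hji : j = i
    · subst hji
      have hcomm : Commute (L.map f).prod g := Commute.list_prod_left _ _ <| by
        simpa using fun k hk => hg k (ne_of_mem_of_not_mem hk hjL)
      rw [Function.update_self, mul_assoc, hcomm.eq, ← mul_assoc,
        List.map_congr_left fun k hk => Function.update_of_ne (ne_of_mem_of_not_mem hk hjL) _ _]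
    · rw [Function.update_of_ne hji, mul_assoc, ih hL (List.mem_of_ne_of_mem (Ne.symm hji) hi)]

variable {n : ℕ}

theorem mul_ordProd (f : Fin n → M) (i : Fin n) (g : M) (hg : ∀ j ≠ i, Commute g (f j)) :
    g * ordProd n f = ordProd n (Function.update f i (g * f i)) :=
  mul_prod_map_eq_prod_map_update (List.nodup_finRange n) (List.mem_finRange i) f g hg

theorem ordProd_mul (f : Fin n → M) (i : Fin n) (g : M) (hg : ∀ j ≠ i, Commute (f j) g) :
    ordProd n f * g = ordProd n (Function.update f i (f i * g)) :=
  prod_map_mul_eq_prod_map_update (List.nodup_finRange n) (List.mem_finRange i) f g hg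

theorem commute_ordProd (f : Fin n → M) (g : M) (hg : ∀ j, Commute g (f j)) :
    Commute g (ordProd n f) :=
  Commute.list_prod_right _ _ <| by simpa using hg

theorem mul_ordProd_pow_of_commute (v : Fin n → M) (hv : ∀ i j, Commute (v i) (v j))
    (i : Fin n) (a : Fin n → ℕ) :
    v i * ordProd n (fun j => v j ^ a j) =
      ordProd n (fun j => v j ^ (a + Pi.single i 1 : Fin n → ℕ) j) := by
  rw [mul_ordProd _ i _ fun j _ => (hv i j).pow_right _]
  congr 1
  funext j
  rcases eq_or_ne j i with rfl | hj
  · simp [pow_succ']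
  · simp [hj]

end OrdProd

section OrdProdAlgebra

variable {R A : Type*} [CommSemiring R] [Semiring A] [Algebra R A] {n : ℕ}

theorem ordProd_eq_mkPiAlgebraFin (f : Fin n → A) :
    ordProd n f = MultilinearMap.mkPiAlgebraFin R n A f := by
  rw [MultilinearMap.mkPiAlgebraFin_apply, List.ofFn_eq_map, ordProd]

theorem ordProd_update_add (f : Fin n → A) (i : Fin n) (x y : A) :
    ordProd n (Function.update f i (x + y)) =
      ordProd n (Function.update f i x) + ordProd n (Function.update f i y) := by
  simp only [ordProd_eq_mkPiAlgebraFin (R := ℕ), MultilinearMap.map_update_add]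

theorem ordProd_update_smul (f : Fin n → A) (i : Fin n) (s : R) (x : A) :
    ordProd n (Function.update f i (s • x)) = s • ordProd n (Function.update f i x) := by
  simp only [ordProd_eq_mkPiAlgebraFin (R := R), MultilinearMap.map_update_smul]

theorem mul_pow_of_mul_eq_smul {u v : A} {s : R} (h : u * v = s • (v * u)) (m : ℕ) :
    u * v ^ m = s ^ m • (v ^ m * u) := by
  induction m with
  | zero => simp
  | succ m ih =>
    rw [pow_succ' v, ← mul_assoc, h, smul_mul_assoc, mul_assoc, ih, mul_smul_comm,
      smul_smul, ← mul_assoc, ← pow_succ', ← pow_succ']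

theorem mul_ordProd_pow_of_mul_eq_smul (v : Fin n → A) (i : Fin n) (g : A) (s : R)
    (hne : ∀ j ≠ i, Commute g (v j)) (hi : g * v i = s • (v i * g)) (a : Fin n → ℕ) :
    g * ordProd n (fun j => v j ^ a j) = s ^ a i • (ordProd n (fun j => v j ^ a j) * g) := by
  rw [mul_ordProd _ i g fun j hj => (hne j hj).pow_right _, mul_pow_of_mul_eq_smul hi,
    ordProd_update_smul, ← ordProd_mul _ i g fun j hj => ((hne j hj).pow_right _).symm]

end OrdProdAlgebra

variable {n : ℕ} {q : ℂ}

section Relations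

variable (i j : Fin n)

theorem commute_X_X : Commute (X n q i) (X n q j) := by
  simp only [Commute, SemiconjBy, X, ← map_mul]
  exact RingQuot.mkAlgHom_rel ℂ (Rel.xx i j)

theorem commute_Y_Y : Commute (Y n q i) (Y n q j) := by
  simp only [Commute, SemiconjBy, Y, ← map_mul]
  exact RingQuot.mkAlgHom_rel ℂ (Rel.yy i j)

theorem commute_Z_Z : Commute (Z n q i) (Z n q j) := by
  simp only [Commute, SemiconjBy, Z, ← map_mul]
  exact RingQuot.mkAlgHom_rel ℂ (Rel.zz i j)

theorem X_mul_Z : X n q i * Z n q i = q • (Z n q i * X n q i) := by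
  simp only [X, Z, ← map_mul, ← map_smul]
  exact RingQuot.mkAlgHom_rel ℂ (Rel.xz i)

theorem Y_mul_Z : Y n q i * Z n q i = q⁻¹ • (Z n q i * Y n q i) := by
  simp only [Y, Z, ← map_mul, ← map_smul]
  exact RingQuot.mkAlgHom_rel ℂ (Rel.yz i)

theorem X_mul_Y : X n q i * Y n q i = q⁻¹ • (Y n q i * X n q i) + Z n q i := by
  simp only [X, Y, Z, ← map_mul, ← map_smul, ← map_add]
  exact RingQuot.mkAlgHom_rel ℂ (Rel.xy i)

variable {i j}

theorem commute_X_Y_of_ne (h : i ≠ j) : Commute (X n q i) (Y n q j) := by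
  simp only [Commute, SemiconjBy, X, Y, ← map_mul]
  exact RingQuot.mkAlgHom_rel ℂ (Rel.xyne i j h)

theorem commute_X_Z_of_ne (h : i ≠ j) : Commute (X n q i) (Z n q j) := by
  simp only [Commute, SemiconjBy, X, Z, ← map_mul]
  exact RingQuot.mkAlgHom_rel ℂ (Rel.xzne i j h)

theorem commute_Y_Z_of_ne (h : i ≠ j) : Commute (Y n q i) (Z n q j) := by
  simp only [Commute, SemiconjBy, Y, Z, ← map_mul]
  exact RingQuot.mkAlgHom_rel ℂ (Rel.yzne i j h)

end Relations

-- `beta q k = 1 + q⁻² + ⋯ + q^{-2(k-1)}`. Since `beta q 0 = 0`, the truncated subtractions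
-- `k - 1` and `b - Pi.single i 1` below only ever occur with coefficient zero.
def beta (q : ℂ) : ℕ → ℂ
  | 0 => 0
  | k + 1 => q⁻¹ ^ 2 * beta q k + 1

theorem X_mul_Y_pow (i : Fin n) (m : ℕ) :
    X n q i * Y n q i ^ m =
      q⁻¹ ^ m • (Y n q i ^ m * X n q i) + beta q m • (Z n q i * Y n q i ^ (m - 1)) := by
  induction m with
  | zero => simp [beta]
  | succ m ih =>
    have hYZ : Y n q i * beta q m • (Z n q i * Y n q i ^ (m - 1)) =
        (q⁻¹ * beta q m) • (Z n q i * Y n q i ^ m) := by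
      cases m with
      | zero => simp [beta]
      | succ m =>
        rw [mul_smul_comm, ← mul_assoc, Y_mul_Z, smul_mul_assoc, mul_assoc, ← pow_succ',
          Nat.add_sub_cancel, smul_smul, mul_comm]
    rw [pow_succ', ← mul_assoc, X_mul_Y, add_mul, smul_mul_assoc, mul_assoc, ih, mul_add,
      mul_smul_comm, hYZ, ← mul_assoc, ← pow_succ', Nat.add_sub_cancel]
    match_scalars
    · ring
    · rw [beta]; ring

theorem Z_mul_pbw (i : Fin n) (a b c : Fin n → ℕ) :
    Z n q i * pbw n q a b c = pbw n q (a + Pi.single i 1) b c := by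
  rw [pbw, pbw, ← mul_assoc, ← mul_assoc, mul_ordProd_pow_of_commute _ commute_Z_Z]

theorem Y_mul_pbw (i : Fin n) (a b c : Fin n → ℕ) :
    Y n q i * pbw n q a b c = q⁻¹ ^ a i • pbw n q a (b + Pi.single i 1) c := by
  rw [pbw, pbw, ← mul_assoc, ← mul_assoc, mul_ordProd_pow_of_mul_eq_smul _ i _ _
      (fun j hj => commute_Y_Z_of_ne hj.symm) (Y_mul_Z i), smul_mul_assoc, smul_mul_assoc,
    mul_assoc _ (Y n q i), mul_ordProd_pow_of_commute _ commute_Y_Y]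

theorem X_mul_ordProd_Y (i : Fin n) (b : Fin n → ℕ) :
    X n q i * ordProd n (fun j => Y n q j ^ b j) =
      q⁻¹ ^ b i • (ordProd n (fun j => Y n q j ^ b j) * X n q i) +
        beta q (b i) •
          (Z n q i * ordProd n (fun j => Y n q j ^ (b - Pi.single i 1 : Fin n → ℕ) j)) := by
  set f : Fin n → H n q := fun j => Y n q j ^ b j
  set f' : Fin n → H n q := fun j => Y n q j ^ (b - Pi.single i 1 : Fin n → ℕ) j
  have hf' : ∀ y, Function.update f' i y = Function.update f i y := fun y => by
    funext j
    rcases eq_or_ne j i with rfl | hj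
    · simp
    · simp [f, f', hj]
  have hXf : ∀ j ≠ i, Commute (X n q i) (f j) := fun j hj =>
    (commute_X_Y_of_ne hj.symm).pow_right _
  have hZf' : ∀ j ≠ i, Commute (Z n q i) (f' j) := fun j hj =>
    ((commute_Y_Z_of_ne hj).pow_left _).symm
  rw [mul_ordProd f i _ hXf, X_mul_Y_pow, ordProd_update_add, ordProd_update_smul,
    ordProd_update_smul, ← ordProd_mul f i _ fun j hj => (hXf j hj).symm,
    mul_ordProd f' i _ hZf', hf']
  simp [f']

theorem X_mul_pbw (i : Fin n) (a b c : Fin n → ℕ) :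
    X n q i * pbw n q a b c =
      (q ^ a i * q⁻¹ ^ b i) • pbw n q a b (c + Pi.single i 1) +
        (q ^ a i * beta q (b i)) • pbw n q (a + Pi.single i 1) (b - Pi.single i 1) c := by
  have hZ : Commute (Z n q i) (ordProd n fun j => Z n q j ^ a j) :=
    commute_ordProd _ _ fun j => (commute_Z_Z i j).pow_right _
  rw [pbw, ← mul_assoc, ← mul_assoc, mul_ordProd_pow_of_mul_eq_smul _ i _ _
      (fun j hj => commute_X_Z_of_ne hj.symm) (X_mul_Z i), smul_mul_assoc, smul_mul_assoc,
    mul_assoc _ (X n q i), X_mul_ordProd_Y, mul_add, add_mul, smul_add, mul_smul_comm,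
    mul_smul_comm, smul_mul_assoc, smul_mul_assoc, smul_smul, smul_smul, ← mul_assoc _ (Z n q i),
    ← hZ.eq, mul_ordProd_pow_of_commute _ commute_Z_Z, mul_assoc _ (_ * X n q i),
    mul_assoc _ (X n q i), mul_ordProd_pow_of_commute _ commute_X_X]
  simp only [pbw, mul_assoc]

abbrev PBWIdx (n : ℕ) := (Fin n → ℕ) × (Fin n → ℕ) × (Fin n → ℕ)

theorem pbw_zero : pbw n q 0 0 0 = 1 := by
  simp [pbw, ordProd]

theorem span_pbw_eq_top :
    Submodule.span ℂ (Set.range fun abc : PBWIdx n => pbw n q abc.1 abc.2.1 abc.2.2) = ⊤ := by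
  set S := Submodule.span ℂ (Set.range fun abc : PBWIdx n => pbw n q abc.1 abc.2.1 abc.2.2)
  have hpbw : ∀ a b c, pbw n q a b c ∈ S := fun a b c =>
    Submodule.subset_span ⟨(a, b, c), rfl⟩
  have hgen : ∀ x : GenIdx n, ∀ s ∈ S,
      RingQuot.mkAlgHom ℂ (Rel n q) (FreeAlgebra.ι ℂ x) * s ∈ S := by
    intro x s hs
    induction hs using Submodule.span_induction with
    | mem s hs =>
      obtain ⟨⟨a, b, c⟩, rfl⟩ := hs
      rcases x with i | i | i
      · rw [← fX, ← X, X_mul_pbw]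
        exact add_mem (S.smul_mem _ (hpbw _ _ _)) (S.smul_mem _ (hpbw _ _ _))
      · rw [← fY, ← Y, Y_mul_pbw]
        exact S.smul_mem _ (hpbw _ _ _)
      · rw [← fZ, ← Z, Z_mul_pbw]
        exact hpbw _ _ _
    | zero => simp
    | add u v _ _ hu hv => rw [mul_add]; exact add_mem hu hv
    | smul r u _ hu => rw [mul_smul_comm]; exact S.smul_mem r hu
  have hmul : ∀ w, ∀ s ∈ S, RingQuot.mkAlgHom ℂ (Rel n q) w * s ∈ S := by
    intro w
    induction w using FreeAlgebra.induction with
    | grade0 r => intro s hs; rw [AlgHom.commutes, ← Algebra.smul_def]; exact S.smul_mem r hs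
    | grade1 x => exact hgen x
    | mul u v hu hv => intro s hs; rw [map_mul, mul_assoc]; exact hu _ (hv s hs)
    | add u v hu hv => intro s hs; rw [map_add, add_mul]; exact add_mem (hu s hs) (hv s hs)
  refine Submodule.eq_top_iff'.mpr fun h => ?_
  obtain ⟨w, rfl⟩ := RingQuot.mkAlgHom_surjective ℂ (Rel n q) h
  simpa using hmul w 1 (pbw_zero (q := q) ▸ hpbw 0 0 0)

section MultiIndex

variable {i j : Fin n}

theorem sub_single_add_single {a : Fin n → ℕ} (h : a i ≠ 0) :
    a - Pi.single i 1 + Pi.single i 1 = a := by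
  funext k
  rcases eq_or_ne k i with rfl | hk
  · simp; omega
  · simp [hk]

theorem add_single_sub_single_of_ne (h : i ≠ j) (a : Fin n → ℕ) :
    a + Pi.single j 1 - Pi.single i 1 = a - Pi.single i 1 + Pi.single j 1 := by
  funext k
  simp only [Pi.add_apply, Pi.sub_apply, Pi.single_apply]
  split_ifs <;> omega

end MultiIndex

def δ (m : PBWIdx n) : PBWIdx n →₀ ℂ := Finsupp.single m 1

theorem ext_δ {f g : Module.End ℂ (PBWIdx n →₀ ℂ)}
    (h : ∀ a b c, f (δ (a, b, c)) = g (δ (a, b, c))) : f = g :=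
  Finsupp.basisSingleOne.ext fun ⟨a, b, c⟩ => h a b c

def actZ (i : Fin n) : Module.End ℂ (PBWIdx n →₀ ℂ) :=
  Finsupp.linearCombination ℂ fun m => δ (m.1 + Pi.single i 1, m.2.1, m.2.2)

def actY (q : ℂ) (i : Fin n) : Module.End ℂ (PBWIdx n →₀ ℂ) :=
  Finsupp.linearCombination ℂ fun m => q⁻¹ ^ m.1 i • δ (m.1, m.2.1 + Pi.single i 1, m.2.2)

def actX (q : ℂ) (i : Fin n) : Module.End ℂ (PBWIdx n →₀ ℂ) :=
  Finsupp.linearCombination ℂ fun m =>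
    (q ^ m.1 i * q⁻¹ ^ m.2.1 i) • δ (m.1, m.2.1, m.2.2 + Pi.single i 1) +
      (q ^ m.1 i * beta q (m.2.1 i)) • δ (m.1 + Pi.single i 1, m.2.1 - Pi.single i 1, m.2.2)

section Action

variable (i : Fin n) (a b c : Fin n → ℕ)

@[simp] theorem actZ_δ : actZ i (δ (a, b, c)) = δ (a + Pi.single i 1, b, c) := by
  simp [actZ, δ]

@[simp] theorem actY_δ :
    actY q i (δ (a, b, c)) = q⁻¹ ^ a i • δ (a, b + Pi.single i 1, c) := by
  simp [actY, δ]

@[simp] theorem actX_δ :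
    actX q i (δ (a, b, c)) =
      (q ^ a i * q⁻¹ ^ b i) • δ (a, b, c + Pi.single i 1) +
        (q ^ a i * beta q (b i)) • δ (a + Pi.single i 1, b - Pi.single i 1, c) := by
  simp [actX, δ]

end Action

section ActionRelations

theorem commute_actZ_actZ (i j : Fin n) : Commute (actZ (n := n) i) (actZ j) := by
  refine ext_δ fun a b c => ?_
  simp [add_right_comm _ (Pi.single i 1)]

theorem commute_actY_actY (i j : Fin n) : Commute (actY q i) (actY q j) := by
  refine ext_δ fun a b c => ?_
  simp [smul_smul, add_right_comm _ (Pi.single i 1), mul_comm]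

theorem commute_actX_actX (i j : Fin n) : Commute (actX q i) (actX q j) := by
  rcases eq_or_ne i j with rfl | hij
  · exact Commute.refl _
  refine ext_δ fun a b c => ?_
  simp only [Module.End.mul_apply, actX_δ, map_add, map_smul, smul_add, smul_smul, Pi.add_apply,
    Pi.sub_apply, Pi.single_eq_of_ne hij, Pi.single_eq_of_ne hij.symm, add_zero, tsub_zero,
    add_right_comm _ (Pi.single i 1), tsub_right_comm (b := Pi.single i 1)]
  match_scalars <;> ring

theorem actY_mul_actZ (i : Fin n) : actY q i * actZ i = q⁻¹ • (actZ i * actY q i) := by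
  refine ext_δ fun a b c => ?_
  simp [smul_smul, pow_succ, mul_comm]

theorem actX_mul_actZ (i : Fin n) : actX q i * actZ i = q • (actZ i * actX q i) := by
  refine ext_δ fun a b c => ?_
  simp only [Module.End.mul_apply, LinearMap.smul_apply, actX_δ, actZ_δ, map_add, map_smul,
    smul_add, smul_smul, Pi.add_apply, Pi.single_eq_same, pow_succ]
  match_scalars <;> ring

theorem actX_mul_actY (hq : q ≠ 0) (i : Fin n) :
    actX q i * actY q i = q⁻¹ • (actY q i * actX q i) + actZ i := by
  refine ext_δ fun a b c => ?_
  simp only [Module.End.mul_apply, LinearMap.add_apply, LinearMap.smul_apply, actX_δ, actY_δ,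
    actZ_δ, map_add, map_smul, smul_add, smul_smul, Pi.add_apply, Pi.single_eq_same,
    add_tsub_cancel_right]
  have hqa : q⁻¹ ^ a i * q ^ a i = 1 := by rw [inv_pow, inv_mul_cancel₀ (pow_ne_zero _ hq)]
  rcases eq_or_ne (b i) 0 with hb | hb
  · simp only [hb, beta, mul_zero, zero_mul, zero_smul, add_zero]
    match_scalars
    · ring
    · linear_combination hqa
  · rw [sub_single_add_single hb, beta]
    match_scalars
    · ring
    · linear_combination hqa

variable {i j : Fin n}

theorem commute_actY_actZ_of_ne (h : i ≠ j) : Commute (actY q i) (actZ j) := by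
  refine ext_δ fun a b c => ?_
  simp [Pi.single_eq_of_ne h]

theorem commute_actX_actZ_of_ne (h : i ≠ j) : Commute (actX q i) (actZ j) := by
  refine ext_δ fun a b c => ?_
  simp [Pi.single_eq_of_ne h, add_right_comm _ (Pi.single i 1)]

theorem commute_actX_actY_of_ne (h : i ≠ j) : Commute (actX q i) (actY q j) := by
  refine ext_δ fun a b c => ?_
  simp only [Module.End.mul_apply, actX_δ, actY_δ, map_add, map_smul, smul_add, smul_smul,
    Pi.add_apply, Pi.single_eq_of_ne h, Pi.single_eq_of_ne h.symm, add_zero,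
    add_single_sub_single_of_ne h]
  match_scalars <;> ring

end ActionRelations

def act (q : ℂ) : GenIdx n → Module.End ℂ (PBWIdx n →₀ ℂ) :=
  Sum.elim (actX q) (Sum.elim (actY q) actZ)

theorem lift_act_eq_of_rel (hq : q ≠ 0) {u v : FreeAlgebra ℂ (GenIdx n)} (h : Rel n q u v) :
    FreeAlgebra.lift ℂ (act q) u = FreeAlgebra.lift ℂ (act q) v := by
  cases h with
  | xx i j => simpa [fX, act] using (commute_actX_actX i j).eq
  | yy i j => simpa [fY, act] using (commute_actY_actY i j).eq
  | zz i j => simpa [fZ, act] using (commute_actZ_actZ i j).eq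
  | xz i => simpa [fX, fZ, act] using actX_mul_actZ i
  | yz i => simpa [fY, fZ, act] using actY_mul_actZ i
  | xy i => simpa [fX, fY, fZ, act] using actX_mul_actY hq i
  | xyne i j h => simpa [fX, fY, act] using (commute_actX_actY_of_ne h).eq
  | xzne i j h => simpa [fX, fZ, act] using (commute_actX_actZ_of_ne h).eq
  | yzne i j h => simpa [fY, fZ, act] using (commute_actY_actZ_of_ne h).eq

def ρ (hq : q ≠ 0) : H n q →ₐ[ℂ] Module.End ℂ (PBWIdx n →₀ ℂ) :=
  RingQuot.liftAlgHom ℂ ⟨FreeAlgebra.lift ℂ (act q), fun _ _ => lift_act_eq_of_rel hq⟩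

section Representation

variable (hq : q ≠ 0) (i : Fin n)

@[simp] theorem ρ_X : ρ hq (X n q i) = actX q i := by
  simp [ρ, X, fX, act]

@[simp] theorem ρ_Y : ρ hq (Y n q i) = actY q i := by
  simp [ρ, Y, fY, act]

@[simp] theorem ρ_Z : ρ hq (Z n q i) = actZ i := by
  simp [ρ, Z, fZ, act]

theorem ρ_pbw_apply (a b c : Fin n → ℕ) :
    ρ hq (pbw n q a b c) (δ (0, 0, 0)) = δ (a, b, c) := by
  induction a using multiIndex_induction with
  | zero =>
    induction b using multiIndex_induction with
    | zero =>
      induction c using multiIndex_induction with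
      | zero => simp [pbw_zero]
      | step c i ih =>
        have hX : X n q i * pbw n q 0 0 c = pbw n q 0 0 (c + Pi.single i 1) := by
          simpa [beta] using X_mul_pbw (q := q) i 0 0 c
        rw [← hX, map_mul, Module.End.mul_apply, ih, ρ_X]
        simp [beta]
    | step b i ih =>
      have hY : Y n q i * pbw n q 0 b c = pbw n q 0 (b + Pi.single i 1) c := by
        simpa using Y_mul_pbw (q := q) i 0 b c
      rw [← hY, map_mul, Module.End.mul_apply, ih, ρ_Y]
      simp
  | step a i ih => rw [← Z_mul_pbw, map_mul, Module.End.mul_apply, ih, ρ_Z, actZ_δ]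

end Representation

theorem linearIndependent_pbw (hq : q ≠ 0) :
    LinearIndependent ℂ fun abc : PBWIdx n => pbw n q abc.1 abc.2.1 abc.2.2 := by
  let E : H n q →ₗ[ℂ] PBWIdx n →₀ ℂ :=
    LinearMap.applyₗ (δ (0, 0, 0)) ∘ₗ (ρ hq).toLinearMap
  refine LinearIndependent.of_comp E ?_
  convert (Finsupp.basisSingleOne : Module.Basis (PBWIdx n) ℂ _).linearIndependent using 1
  funext ⟨a, b, c⟩
  exact ρ_pbw_apply hq a b c

theorem pbw_basis_general (n : ℕ) (q : ℂ) (hq : q ≠ 0) :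
    LinearIndependent ℂ
        (fun abc : (Fin n → ℕ) × (Fin n → ℕ) × (Fin n → ℕ) =>
          pbw n q abc.1 abc.2.1 abc.2.2) ∧
      Submodule.span ℂ
          (Set.range (fun abc : (Fin n → ℕ) × (Fin n → ℕ) × (Fin n → ℕ) =>
            pbw n q abc.1 abc.2.1 abc.2.2)) = ⊤ :=
  ⟨linearIndependent_pbw hq, span_pbw_eq_top⟩

/-- For `n ≥ 1` and `q ≠ 0`, the PBW monomials `z^a y^b x^c`, indexed by
triples of multi-indices `(a, b, c)`, form a basis of `𝔥_n(q)` over `ℂ`: the family is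
linearly independent and spans. -/
theorem pbw_basis (n : ℕ) (hn : 1 ≤ n) (q : ℂ) (hq : q ≠ 0) :
    LinearIndependent ℂ
        (fun abc : (Fin n → ℕ) × (Fin n → ℕ) × (Fin n → ℕ) =>
          pbw n q abc.1 abc.2.1 abc.2.2) ∧
      Submodule.span ℂ
          (Set.range (fun abc : (Fin n → ℕ) × (Fin n → ℕ) × (Fin n → ℕ) =>
            pbw n q abc.1 abc.2.1 abc.2.2)) = ⊤ :=
  pbw_basis_general n q hq

end QHeisenberg
end
end

section
/- Let n ≥ 1 and let q ∈ ℂ be nonzero and not a root of unity. Fix an index i, and let v ∈ 𝔥_n(q) lie in the ℂ-linear span V of the 3n generators {x_j, y_j, z_j}. If v·z_j = q^{δ_{ij}}·z_j·v for all j (i.e., v z_i = q z_i v and v z_j = z_j v for j ≠ i), then v is a scalar multiple of x_i. Likewise, if v·z_j = q^{−δ_{ij}}·z_j·v for all j, then v is a scalar multiple of y_i. -/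
noncomputable section

open scoped BigOperators

namespace QHeisenberg

/-- The `ℂ`-linear span `V` of the `3n` generators `x_i, y_i, z_i` of `𝔥_n(q)`. -/
def genSpan (n : ℕ) (q : ℂ) : Submodule ℂ (H n q) :=
  Submodule.span ℂ (Set.range (X n q) ∪ Set.range (Y n q) ∪ Set.range (Z n q))

/-!
Conjugation by `z_k` rescales every generator: `g z_k = λ_k(g) z_k g` with `λ_k(x_j) = q^{δ_jk}`,
`λ_k(y_j) = q^{-δ_jk}` and `λ_k(z_j) = 1`. Hence if `v = ∑ c_g g` satisfies `v z_k = μ z_k v`, then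
`z_k ∑ c_g (λ_k(g) - μ) g = 0`. In the representation of `𝔥_n(q)` on `ℂ[X_1, …, X_n]` where `x_j`
dilates `X_j` by `q`, `y_j` multiplies by `X_j` and `z_j` is `(q - q⁻¹) y_j x_j`, the operator
`z_k` is injective and the generators act linearly independently as soon as `q ≠ 0, ±1`. So
`c_g = 0` unless `λ_k(g) = μ`, and for `k = i`, `μ = q` (resp. `q⁻¹`) only `x_i` (resp. `y_i`) is left.
-/

variable {n : ℕ} {q : ℂ}

section Lift

variable {A : Type*} [Ring A] [Algebra ℂ A]

structure IsQWeylFamily (q : ℂ) (s t : Fin n → A) : Prop where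
  s_comm : ∀ i j, Commute (s i) (s j)
  t_comm : ∀ i j, Commute (t i) (t j)
  s_mul_t_self : ∀ i, s i * t i = q • (t i * s i)
  s_t_comm_of_ne : ∀ i j, i ≠ j → Commute (s i) (t j)

namespace IsQWeylFamily

variable {s t : Fin n → A}

lemma commute_t_ts (h : IsQWeylFamily q s t) {i j : Fin n} (hij : i ≠ j) :
    Commute (t i) (t j * s j) :=
  (h.t_comm i j).mul_right (h.s_t_comm_of_ne j i hij.symm).symm

lemma commute_s_ts (h : IsQWeylFamily q s t) {i j : Fin n} (hij : i ≠ j) :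
    Commute (s i) (t j * s j) :=
  (h.s_t_comm_of_ne i j hij).mul_right (h.s_comm i j)

lemma commute_ts_ts (h : IsQWeylFamily q s t) (i j : Fin n) :
    Commute (t i * s i) (t j * s j) := by
  rcases eq_or_ne i j with rfl | hij
  · exact Commute.refl _
  · exact (h.commute_t_ts hij).mul_left (h.commute_s_ts hij)

/-- The `z`-generators go to `(q - q⁻¹) tᵢ sᵢ`, as forced by `xᵢ yᵢ = q⁻¹ yᵢ xᵢ + zᵢ`. -/
def genImage (q : ℂ) (s t : Fin n → A) : GenIdx n → A :=
  Sum.elim s (Sum.elim t fun i => (q - q⁻¹) • (t i * s i))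

lemma freeAlgebraLift_eq_of_rel (h : IsQWeylFamily q s t) ⦃a b : FreeAlgebra ℂ (GenIdx n)⦄
    (hab : Rel n q a b) :
    FreeAlgebra.lift ℂ (genImage q s t) a = FreeAlgebra.lift ℂ (genImage q s t) b := by
  induction hab with
  | xx i j => simpa [fX, genImage] using (h.s_comm i j).eq
  | yy i j => simpa [fY, genImage] using (h.t_comm i j).eq
  | zz i j => simp [fZ, genImage, (h.commute_ts_ts i j).eq]
  | xz i =>
    simp only [fX, fZ, genImage, map_mul, map_smul, FreeAlgebra.lift_ι_apply, Sum.elim_inl,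
      Sum.elim_inr, mul_smul_comm, smul_mul_assoc, ← mul_assoc, h.s_mul_t_self, smul_smul]
    rw [mul_comm]
  | yz i =>
    have hq : q⁻¹ * ((q - q⁻¹) * q) = q - q⁻¹ := by
      rcases eq_or_ne q 0 with rfl | hq
      · simp
      · field_simp
    simp only [fY, fZ, genImage, map_mul, map_smul, FreeAlgebra.lift_ι_apply, Sum.elim_inl,
      Sum.elim_inr, mul_smul_comm, smul_mul_assoc, mul_assoc, h.s_mul_t_self, smul_smul]
    rw [hq]
  | xy i =>
    simp only [fX, fY, fZ, genImage, map_mul, map_smul, map_add, FreeAlgebra.lift_ι_apply,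
      Sum.elim_inl, Sum.elim_inr, h.s_mul_t_self, ← add_smul, add_sub_cancel]
  | xyne i j hij => simpa [fX, fY, genImage] using (h.s_t_comm_of_ne i j hij).eq
  | xzne i j hij => simp [fX, fZ, genImage, (h.commute_s_ts hij).eq]
  | yzne i j hij => simp [fY, fZ, genImage, (h.commute_t_ts hij).eq]

def lift (h : IsQWeylFamily q s t) : H n q →ₐ[ℂ] A :=
  RingQuot.liftAlgHom ℂ ⟨FreeAlgebra.lift ℂ (genImage q s t), h.freeAlgebraLift_eq_of_rel⟩

@[simp] lemma lift_X (h : IsQWeylFamily q s t) (i : Fin n) : h.lift (X n q i) = s i := by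
  simp [lift, X, fX, genImage]

@[simp] lemma lift_Y (h : IsQWeylFamily q s t) (i : Fin n) : h.lift (Y n q i) = t i := by
  simp [lift, Y, fY, genImage]

@[simp] lemma lift_Z (h : IsQWeylFamily q s t) (i : Fin n) :
    h.lift (Z n q i) = (q - q⁻¹) • (t i * s i) := by
  simp [lift, Z, fZ, genImage]

end IsQWeylFamily

end Lift

variable (q) in
def dilate (j : Fin n) : MvPolynomial (Fin n) ℂ →ₐ[ℂ] MvPolynomial (Fin n) ℂ :=
  MvPolynomial.aeval fun k => (if j = k then q else 1) • MvPolynomial.X k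

@[simp] lemma dilate_X (j k : Fin n) :
    dilate q j (MvPolynomial.X k) = (if j = k then q else 1) • MvPolynomial.X k :=
  MvPolynomial.aeval_X _ _

lemma dilate_comm (i j : Fin n) :
    (dilate q i).comp (dilate q j) = (dilate q j).comp (dilate q i) :=
  MvPolynomial.algHom_ext fun k => by
    simp only [AlgHom.comp_apply, dilate_X, map_smul, smul_smul, mul_comm]

lemma dilate_inv_comp_dilate (hq : q ≠ 0) (j : Fin n) :
    (dilate q⁻¹ j).comp (dilate q j) = AlgHom.id ℂ _ :=
  MvPolynomial.algHom_ext fun k => by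
    by_cases hjk : j = k <;> simp [hjk, smul_smul, hq]

lemma dilate_injective (hq : q ≠ 0) (j : Fin n) : Function.Injective (dilate q j) :=
  Function.LeftInverse.injective (g := dilate q⁻¹ j) fun p =>
    DFunLike.congr_fun (dilate_inv_comp_dilate hq j) p

lemma isQWeylFamily_dilate_mulLeft :
    IsQWeylFamily q (fun j : Fin n => (dilate q j).toLinearMap)
      (fun j => LinearMap.mulLeft ℂ (MvPolynomial.X j)) where
  s_comm i j := LinearMap.ext fun p => DFunLike.congr_fun (dilate_comm i j) p
  t_comm i j := LinearMap.ext fun p => mul_left_comm _ _ _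
  s_mul_t_self i := LinearMap.ext fun p => by simp
  s_t_comm_of_ne i j hij := LinearMap.ext fun p => by simp [hij]

def polyRep (n : ℕ) (q : ℂ) : H n q →ₐ[ℂ] Module.End ℂ (MvPolynomial (Fin n) ℂ) :=
  isQWeylFamily_dilate_mulLeft.lift

def gen (n : ℕ) (q : ℂ) : GenIdx n → H n q := Sum.elim (X n q) (Sum.elim (Y n q) (Z n q))

lemma linearIndependent_polyRep_gen (hq1 : q ≠ 1) (hq2 : q - q⁻¹ ≠ 0) :
    LinearIndependent ℂ (polyRep n q ∘ gen n q) := by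
  rw [Fintype.linearIndependent_iff]
  intro c hc
  -- On the `k`-th coordinate axis the images of `1` and `X k` are polynomials in `r` of degree
  -- at most `2`, whose coefficients isolate the `k`-th coefficients of `c`.
  have on_one (k : Fin n) (r : ℂ) : ∑ j, c (.inl j) +
      (c (.inr (.inl k)) + (q - q⁻¹) * c (.inr (.inr k))) * r = 0 := by
    have := congrArg (fun W => MvPolynomial.eval (Pi.single k r) (W 1)) hc
    simp [Fintype.sum_sum_type, polyRep, gen, Pi.single_apply] at this
    linear_combination this
  have on_X (k : Fin n) (r : ℂ) : (∑ j, c (.inl j) + (q - 1) * c (.inl k)) * r +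
      (c (.inr (.inl k)) + (q - q⁻¹) * q * c (.inr (.inr k))) * r ^ 2 = 0 := by
    have := congrArg (fun W => MvPolynomial.eval (Pi.single k r) (W (MvPolynomial.X k))) hc
    simp [Fintype.sum_sum_type, polyRep, gen, Pi.single_apply, Finset.sum_ite,
      Finset.filter_eq', Finset.filter_ne', Finset.sum_erase_eq_sub, ← Finset.sum_mul] at this
    linear_combination this
  have hx (k : Fin n) : c (.inl k) = 0 := by
    have : (q - 1) * c (.inl k) = 0 := by
      linear_combination (on_X k 1 - on_X k (-1)) / 2 - on_one k 0
    exact (mul_eq_zero.mp this).resolve_left (sub_ne_zero.mpr hq1)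
  have hz (k : Fin n) : c (.inr (.inr k)) = 0 := by
    have : ((q - q⁻¹) * (q - 1)) * c (.inr (.inr k)) = 0 := by
      linear_combination (on_X k 1 + on_X k (-1)) / 2 - on_one k 1 + on_one k 0
    exact (mul_eq_zero.mp this).resolve_left (mul_ne_zero hq2 (sub_ne_zero.mpr hq1))
  rintro (k | k | k)
  · exact hx k
  · linear_combination on_one k 1 - on_one k 0 - (q - q⁻¹) * hz k
  · exact hz k

lemma polyRep_Z_injective (hq : q ≠ 0) (hq2 : q - q⁻¹ ≠ 0) (k : Fin n) :
    Function.Injective (polyRep n q (Z n q k)) := by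
  simp only [polyRep, IsQWeylFamily.lift_Z, LinearMap.coe_smul, Module.End.coe_mul]
  exact (smul_right_injective _ hq2).comp
    ((mul_right_injective₀ (MvPolynomial.X_ne_zero k)).comp (dilate_injective hq k))

lemma genSpan_eq_span_range_gen : genSpan n q = Submodule.span ℂ (Set.range (gen n q)) := by
  simp [genSpan, gen, Set.Sum.elim_range, Set.union_assoc]

variable (q) in
def weight (k : Fin n) : GenIdx n → ℂ :=
  Sum.elim (fun j => if j = k then q else 1) (Sum.elim (fun j => if j = k then q⁻¹ else 1) 1)

lemma gen_mul_Z (t : GenIdx n) (k : Fin n) :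
    gen n q t * Z n q k = weight q k t • (Z n q k * gen n q t) := by
  have rel {a b} (h : Rel n q a b) := RingQuot.mkAlgHom_rel ℂ h
  rcases t with j | j | j
  · rcases eq_or_ne j k with rfl | hjk
    · simpa [gen, weight, X, Z] using rel (Rel.xz j)
    · simpa [gen, weight, X, Z, hjk] using rel (Rel.xzne j k hjk)
  · rcases eq_or_ne j k with rfl | hjk
    · simpa [gen, weight, Y, Z] using rel (Rel.yz j)
    · simpa [gen, weight, Y, Z, hjk] using rel (Rel.yzne j k hjk)
  · simpa [gen, weight, Z] using rel (Rel.zz j k)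

lemma Z_mul_sum_weight_sub_smul_gen (c : GenIdx n → ℂ) (μ : ℂ) (k : Fin n) :
    Z n q k * ∑ t, (c t * (weight q k t - μ)) • gen n q t =
      (∑ t, c t • gen n q t) * Z n q k - μ • (Z n q k * ∑ t, c t • gen n q t) := by
  simp only [Finset.mul_sum, Finset.sum_mul, Finset.smul_sum, mul_smul_comm, smul_mul_assoc,
    gen_mul_Z, ← Finset.sum_sub_distrib, smul_smul, ← sub_smul, mul_sub, mul_comm μ]

lemma coeff_mul_weight_sub_eq_zero (hq : q ≠ 0) (hq1 : q ≠ 1) (hq2 : q - q⁻¹ ≠ 0)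
    {c : GenIdx n → ℂ} {μ : ℂ} {k : Fin n}
    (h : (∑ t, c t • gen n q t) * Z n q k = μ • (Z n q k * ∑ t, c t • gen n q t))
    (t : GenIdx n) : c t * (weight q k t - μ) = 0 := by
  have hZ : Z n q k * ∑ t, (c t * (weight q k t - μ)) • gen n q t = 0 := by
    rw [Z_mul_sum_weight_sub_smul_gen, h, sub_self]
  have hrep : ∑ t, (c t * (weight q k t - μ)) • (polyRep n q ∘ gen n q) t = 0 := by
    refine LinearMap.ext fun p => polyRep_Z_injective hq hq2 k ?_
    simpa [map_sum] using LinearMap.congr_fun (congrArg (polyRep n q) hZ) p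
  exact Fintype.linearIndependent_iff.mp (linearIndependent_polyRep_gen hq1 hq2) _ hrep t

lemma weight_eq_self_iff (hq1 : q ≠ 1) (hq2 : q - q⁻¹ ≠ 0) {k : Fin n} {t : GenIdx n} :
    weight q k t = q ↔ t = .inl k := by
  have : q⁻¹ ≠ q := (sub_ne_zero.mp hq2).symm
  rcases t with j | j | j <;> by_cases hjk : j = k <;> simp [weight, hjk, this, hq1.symm]

lemma weight_eq_inv_iff (hq1 : q ≠ 1) (hq2 : q - q⁻¹ ≠ 0) {k : Fin n} {t : GenIdx n} :
    weight q k t = q⁻¹ ↔ t = .inr (.inl k) := by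
  have : q ≠ q⁻¹ := sub_ne_zero.mp hq2
  rcases t with j | j | j <;> by_cases hjk : j = k <;> simp [weight, hjk, this, hq1]

lemma sum_smul_gen_eq_single (hq : q ≠ 0) (hq1 : q ≠ 1) (hq2 : q - q⁻¹ ≠ 0)
    {c : GenIdx n → ℂ} {μ : ℂ} {k : Fin n} {t₀ : GenIdx n}
    (h : (∑ t, c t • gen n q t) * Z n q k = μ • (Z n q k * ∑ t, c t • gen n q t))
    (hμ : ∀ t, weight q k t = μ ↔ t = t₀) :
    ∑ t, c t • gen n q t = c t₀ • gen n q t₀ := by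
  refine Finset.sum_eq_single_of_mem t₀ (Finset.mem_univ _) fun t _ ht => ?_
  have hw : weight q k t - μ ≠ 0 := sub_ne_zero.mpr (mt (hμ t).mp ht)
  rw [(mul_eq_zero.mp (coeff_mul_weight_sub_eq_zero hq hq1 hq2 h t)).resolve_right hw, zero_smul]

theorem eigenvector_is_scalar_multiple_general (n : ℕ) (q : ℂ) (hq : q ≠ 0)
    (hq' : NotRootOfUnity q) (i : Fin n) (v : H n q) (hv : v ∈ genSpan n q) :
    ((∀ j : Fin n, v * Z n q j = (if j = i then q else 1) • (Z n q j * v)) →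
        ∃ c : ℂ, v = c • X n q i) ∧
      ((∀ j : Fin n, v * Z n q j = (if j = i then q⁻¹ else 1) • (Z n q j * v)) →
        ∃ c : ℂ, v = c • Y n q i) := by
  have hq1 : q ≠ 1 := fun h => hq' 1 le_rfl (by simp [h])
  have hq2 : q - q⁻¹ ≠ 0 := fun h =>
    hq' 2 one_le_two (by field_simp at h; linear_combination h)
  rw [genSpan_eq_span_range_gen, Submodule.mem_span_range_iff_exists_fun] at hv
  obtain ⟨c, rfl⟩ := hv
  refine ⟨fun h => ⟨c (.inl i), ?_⟩, fun h => ⟨c (.inr (.inl i)), ?_⟩⟩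
  · exact sum_smul_gen_eq_single hq hq1 hq2 (by simpa using h i)
      fun t => weight_eq_self_iff hq1 hq2
  · exact sum_smul_gen_eq_single hq hq1 hq2 (by simpa using h i)
      fun t => weight_eq_inv_iff hq1 hq2

/-- Let `q` be nonzero and not a root of unity, and let `v` lie in the
span `V` of the generators.  If `v * z_j = q^{δ_{ij}} • (z_j * v)` for all `j`, then `v`
is a scalar multiple of `x_i`; likewise with `q^{-δ_{ij}}` and `y_i`. -/
theorem eigenvector_is_scalar_multiple (n : ℕ) (hn : 1 ≤ n) (q : ℂ) (hq : q ≠ 0)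
    (hq' : NotRootOfUnity q) (i : Fin n) (v : H n q) (hv : v ∈ genSpan n q) :
    ((∀ j : Fin n, v * Z n q j = (if j = i then q else 1) • (Z n q j * v)) →
        ∃ c : ℂ, v = c • X n q i) ∧
      ((∀ j : Fin n, v * Z n q j = (if j = i then q⁻¹ else 1) • (Z n q j * v)) →
        ∃ c : ℂ, v = c • Y n q i) :=
  eigenvector_is_scalar_multiple_general n q hq hq' i v hv

end QHeisenberg
end
end

section
/- Let n ≥ 1 and q ∈ ℂ nonzero. For every permutation π of Fin n and all families of units A, B : Fin n → ℂˣ, there exists a unique ℂ-algebra automorphism φ of 𝔥_n(q) such that for every i: φ(x_i) = A_i · x_{π(i)}, φ(y_i) = B_i · y_{π(i)}, and φ(z_i) = A_i B_i · z_{π(i)}. Moreover φ maps V into V. -/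
/-!
Rescaling `x_i, y_i, z_i` by `a_i, b_i, a_i b_i` and permuting the indices preserves the
defining relations (scaling `z_i` by `a_i b_i` is forced by `x_i y_i = q⁻¹ y_i x_i + z_i`), so by
the universal property of `𝔥_n(q)` it defines an endomorphism. Two rescalings compose to the
rescaling by the composed permutation and the (permuted) products of the scalars, so the one with
data `(π⁻¹, A⁻¹, B⁻¹)` is an inverse. Uniqueness holds because the generators generate, and `V`
is preserved since each generator goes to a multiple of a generator.
-/

noncomputable section

open scoped BigOperators

namespace QHeisenberg

structure SatisfiesRelations {R : Type*} [Semiring R] [Algebra ℂ R] {ι : Type*} (q : ℂ)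
    (x y z : ι → R) : Prop where
  xx (i j : ι) : x i * x j = x j * x i
  yy (i j : ι) : y i * y j = y j * y i
  zz (i j : ι) : z i * z j = z j * z i
  xz (i : ι) : x i * z i = q • (z i * x i)
  yz (i : ι) : y i * z i = q⁻¹ • (z i * y i)
  xy (i : ι) : x i * y i = q⁻¹ • (y i * x i) + z i
  xy_of_ne {i j : ι} : i ≠ j → x i * y j = y j * x i
  xz_of_ne {i j : ι} : i ≠ j → x i * z j = z j * x i
  yz_of_ne {i j : ι} : i ≠ j → y i * z j = z j * y i

section Relations

variable {R : Type*} [Semiring R] [Algebra ℂ R] {ι κ : Type*} {q : ℂ} {x y z : ι → R}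

theorem SatisfiesRelations.comp_smul (h : SatisfiesRelations q x y z) {f : κ → ι}
    (hf : Function.Injective f) (a b : κ → ℂ) :
    SatisfiesRelations q (fun i => a i • x (f i)) (fun i => b i • y (f i))
      (fun i => (a i * b i) • z (f i)) where
  xx i j := by simp only [smul_mul_smul_comm, h.xx, mul_comm]
  yy i j := by simp only [smul_mul_smul_comm, h.yy, mul_comm]
  zz i j := by simp only [smul_mul_smul_comm, h.zz, mul_comm]
  xz i := by simp only [smul_mul_smul_comm, h.xz, smul_smul]; ring_nf
  yz i := by simp only [smul_mul_smul_comm, h.yz, smul_smul]; ring_nf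
  xy i := by simp only [smul_mul_smul_comm, h.xy, smul_add, smul_smul]; ring_nf
  xy_of_ne hij := by simp only [smul_mul_smul_comm, h.xy_of_ne (hf.ne hij), mul_comm]
  xz_of_ne hij := by simp only [smul_mul_smul_comm, h.xz_of_ne (hf.ne hij), mul_comm]
  yz_of_ne hij := by simp only [smul_mul_smul_comm, h.yz_of_ne (hf.ne hij), mul_comm]

end Relations

variable {n : ℕ} {q : ℂ}

theorem satisfiesRelations_generators : SatisfiesRelations q (X n q) (Y n q) (Z n q) where
  xx i j := by simpa only [X, map_mul] using RingQuot.mkAlgHom_rel ℂ (Rel.xx (q := q) i j)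
  yy i j := by simpa only [Y, map_mul] using RingQuot.mkAlgHom_rel ℂ (Rel.yy (q := q) i j)
  zz i j := by simpa only [Z, map_mul] using RingQuot.mkAlgHom_rel ℂ (Rel.zz (q := q) i j)
  xz i := by simpa only [X, Z, map_mul, map_smul] using RingQuot.mkAlgHom_rel ℂ (Rel.xz i)
  yz i := by simpa only [Y, Z, map_mul, map_smul] using RingQuot.mkAlgHom_rel ℂ (Rel.yz i)
  xy i := by
    simpa only [X, Y, Z, map_mul, map_smul, map_add] using RingQuot.mkAlgHom_rel ℂ (Rel.xy i)
  xy_of_ne h := by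
    simpa only [X, Y, map_mul] using RingQuot.mkAlgHom_rel ℂ (Rel.xyne (q := q) _ _ h)
  xz_of_ne h := by
    simpa only [X, Z, map_mul] using RingQuot.mkAlgHom_rel ℂ (Rel.xzne (q := q) _ _ h)
  yz_of_ne h := by
    simpa only [Y, Z, map_mul] using RingQuot.mkAlgHom_rel ℂ (Rel.yzne (q := q) _ _ h)

section Lift

variable {R : Type*} [Semiring R] [Algebra ℂ R]

def lift {x y z : Fin n → R} (h : SatisfiesRelations q x y z) : H n q →ₐ[ℂ] R :=
  RingQuot.liftAlgHom ℂ ⟨FreeAlgebra.lift ℂ (Sum.elim x (Sum.elim y z)), by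
    rintro _ _ (⟨i, j⟩ | ⟨i, j⟩ | ⟨i, j⟩ | i | i | i | ⟨i, j, hij⟩ | ⟨i, j, hij⟩ | ⟨i, j, hij⟩) <;>
      simp only [fX, fY, fZ, map_mul, map_add, map_smul, FreeAlgebra.lift_ι_apply,
        Sum.elim_inl, Sum.elim_inr]
    exacts [h.xx i j, h.yy i j, h.zz i j, h.xz i, h.yz i, h.xy i, h.xy_of_ne hij,
      h.xz_of_ne hij, h.yz_of_ne hij]⟩

variable {x y z : Fin n → R} (h : SatisfiesRelations q x y z) (i : Fin n)

@[simp]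
theorem lift_X : lift h (X n q i) = x i := by simp [lift, X, fX]

@[simp]
theorem lift_Y : lift h (Y n q i) = y i := by simp [lift, Y, fY]

@[simp]
theorem lift_Z : lift h (Z n q i) = z i := by simp [lift, Z, fZ]

theorem algHom_ext {f g : H n q →ₐ[ℂ] R} (hX : ∀ i, f (X n q i) = g (X n q i))
    (hY : ∀ i, f (Y n q i) = g (Y n q i)) (hZ : ∀ i, f (Z n q i) = g (Z n q i)) : f = g := by
  refine RingQuot.ringQuot_ext' _ _ _ (FreeAlgebra.hom_ext (funext ?_))
  rintro (i | i | i)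
  exacts [hX i, hY i, hZ i]

end Lift

def rescale (π : Equiv.Perm (Fin n)) (a b : Fin n → ℂ) : H n q →ₐ[ℂ] H n q :=
  lift (satisfiesRelations_generators.comp_smul π.injective a b)

section Rescale

variable (π : Equiv.Perm (Fin n)) (a b : Fin n → ℂ) (i : Fin n)

@[simp]
theorem rescale_X : rescale π a b (X n q i) = a i • X n q (π i) := lift_X _ i

@[simp]
theorem rescale_Y : rescale π a b (Y n q i) = b i • Y n q (π i) := lift_Y _ i

@[simp]
theorem rescale_Z : rescale π a b (Z n q i) = (a i * b i) • Z n q (π i) := lift_Z _ i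

end Rescale

theorem rescale_comp (σ π : Equiv.Perm (Fin n)) (a b c d : Fin n → ℂ) :
    (rescale (q := q) σ a b).comp (rescale π c d) =
      rescale (π.trans σ) (fun i => a (π i) * c i) (fun i => b (π i) * d i) :=
  algHom_ext (by simp [smul_smul, mul_comm]) (by simp [smul_smul, mul_comm])
    (by simp [smul_smul, mul_mul_mul_comm, mul_comm])

theorem rescale_one : rescale (q := q) (Equiv.refl (Fin n)) (fun _ => 1) (fun _ => 1) =
    AlgHom.id ℂ (H n q) :=
  algHom_ext (by simp) (by simp) (by simp)

def rescaleEquiv (π : Equiv.Perm (Fin n)) (A B : Fin n → ℂˣ) : H n q ≃ₐ[ℂ] H n q :=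
  AlgEquiv.ofAlgHom (rescale π (A ·) (B ·))
    (rescale π.symm (fun i => ↑(A (π.symm i))⁻¹) (fun i => ↑(B (π.symm i))⁻¹))
    (by simp [rescale_comp, rescale_one]) (by simp [rescale_comp, rescale_one])

@[simp]
theorem rescaleEquiv_apply (π : Equiv.Perm (Fin n)) (A B : Fin n → ℂˣ) (v : H n q) :
    rescaleEquiv π A B v = rescale π (A ·) (B ·) v := rfl

theorem X_mem_genSpan (i : Fin n) : X n q i ∈ genSpan n q :=
  Submodule.subset_span (.inl (.inl ⟨i, rfl⟩))

theorem Y_mem_genSpan (i : Fin n) : Y n q i ∈ genSpan n q :=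
  Submodule.subset_span (.inl (.inr ⟨i, rfl⟩))

theorem Z_mem_genSpan (i : Fin n) : Z n q i ∈ genSpan n q :=
  Submodule.subset_span (.inr ⟨i, rfl⟩)

theorem map_genSpan_le {f : H n q →ₗ[ℂ] H n q} (hX : ∀ i, f (X n q i) ∈ genSpan n q)
    (hY : ∀ i, f (Y n q i) ∈ genSpan n q) (hZ : ∀ i, f (Z n q i) ∈ genSpan n q) :
    (genSpan n q).map f ≤ genSpan n q := by
  refine (Submodule.map_span_le _ _ _).mpr ?_
  rintro _ ((⟨i, rfl⟩ | ⟨i, rfl⟩) | ⟨i, rfl⟩)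
  exacts [hX i, hY i, hZ i]

theorem automorphism_exists_unique_general (n : ℕ) (q : ℂ)
    (π : Equiv.Perm (Fin n)) (A B : Fin n → ℂˣ) :
    (∃! φ : H n q ≃ₐ[ℂ] H n q,
        ∀ i : Fin n,
          φ (X n q i) = (A i : ℂ) • X n q (π i) ∧
            φ (Y n q i) = (B i : ℂ) • Y n q (π i) ∧
            φ (Z n q i) = ((A i : ℂ) * (B i : ℂ)) • Z n q (π i)) ∧
      ∀ φ : H n q ≃ₐ[ℂ] H n q,
        (∀ i : Fin n,
          φ (X n q i) = (A i : ℂ) • X n q (π i) ∧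
            φ (Y n q i) = (B i : ℂ) • Y n q (π i) ∧
            φ (Z n q i) = ((A i : ℂ) * (B i : ℂ)) • Z n q (π i)) →
        ∀ v ∈ genSpan n q, φ v ∈ genSpan n q := by
  refine ⟨⟨rescaleEquiv π A B, fun i => by simp, fun φ hφ => ?_⟩, fun φ hφ v hv => ?_⟩
  · refine AlgEquiv.coe_toAlgHom_injective (algHom_ext ?_ ?_ ?_) <;> intro i <;> simp [hφ i]
  · refine map_genSpan_le (f := φ.toLinearMap) ?_ ?_ ?_ ⟨v, hv, rfl⟩ <;> intro i <;>
      simp only [AlgEquiv.toLinearMap_apply, hφ i]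
    exacts [Submodule.smul_mem _ _ (X_mem_genSpan _), Submodule.smul_mem _ _ (Y_mem_genSpan _),
      Submodule.smul_mem _ _ (Z_mem_genSpan _)]

/-- For every permutation `π` of `Fin n` and families of units
`A, B : Fin n → ℂˣ`, there is a unique `ℂ`-algebra automorphism `φ` of `𝔥_n(q)` with
`φ(x_i) = A_i x_{π(i)}`, `φ(y_i) = B_i y_{π(i)}`, `φ(z_i) = A_i B_i z_{π(i)}`;
moreover any such `φ` maps `V` into `V`. -/
theorem automorphism_exists_unique (n : ℕ) (hn : 1 ≤ n) (q : ℂ) (hq : q ≠ 0)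
    (π : Equiv.Perm (Fin n)) (A B : Fin n → ℂˣ) :
    (∃! φ : H n q ≃ₐ[ℂ] H n q,
        ∀ i : Fin n,
          φ (X n q i) = (A i : ℂ) • X n q (π i) ∧
            φ (Y n q i) = (B i : ℂ) • Y n q (π i) ∧
            φ (Z n q i) = ((A i : ℂ) * (B i : ℂ)) • Z n q (π i)) ∧
      ∀ φ : H n q ≃ₐ[ℂ] H n q,
        (∀ i : Fin n,
          φ (X n q i) = (A i : ℂ) • X n q (π i) ∧
            φ (Y n q i) = (B i : ℂ) • Y n q (π i) ∧
            φ (Z n q i) = ((A i : ℂ) * (B i : ℂ)) • Z n q (π i)) →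
        ∀ v ∈ genSpan n q, φ v ∈ genSpan n q :=
  automorphism_exists_unique_general n q π A B

end QHeisenberg
end
end
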